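/- For every Schwartz function f : (Fin n → ℝ) × ℝ → ℂ, the function y ↦ (∏ i, (y i)^(r i)) • f(y, (p y)⁻¹) is Bochner integrable on Y₀ with respect to Lebesgue measure. (Integrability part of the paper's Lemma 6.2.) -/

import Mathlib

/-!
On `Y₀` the monomial `∏ yᵢ ^ rᵢ` equals `p(y)⁻ᴹ · ∏ yᵢ ^ (rᵢ + M lᵢ)` for any `M`, and for `M` large
all the exponents `rᵢ + M lᵢ` are nonnegative, so the weight is bounded by a power of
`1 + ‖(y, p(y)⁻¹)‖`. Sampling a Schwartz function along the graph of `y ↦ p(y)⁻¹` therefore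
absorbs the weight and still decays faster than any power of `1 + ‖y‖`.
-/

open MeasureTheory
open scoped SchwartzMap

theorem exists_natCast_eq_add_mul {ι : Type*} [Fintype ι] {l : ι → ℕ} {r : ι → ℤ}
    (hlr : ∀ i, l i = 0 → 0 ≤ r i) :
    ∃ (M : ℕ) (c : ι → ℕ), ∀ i, (c i : ℤ) = r i + M * l i := by
  refine ⟨∑ i, (r i).natAbs, fun i ↦ (r i + (∑ j, (r j).natAbs : ℕ) * l i).toNat,
    fun i ↦ Int.toNat_of_nonneg ?_⟩
  rcases Nat.eq_zero_or_pos (l i) with hl | hl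
  · simpa [hl] using hlr i hl
  · have hr : (r i).natAbs ≤ ∑ j, (r j).natAbs :=
      Finset.single_le_sum (f := fun j ↦ (r j).natAbs) (fun j _ ↦ Nat.zero_le _)
        (Finset.mem_univ i)
    have hr' : -r i ≤ ((∑ j, (r j).natAbs : ℕ) : ℤ) := by omega
    have hl' : (1 : ℤ) ≤ l i := by exact_mod_cast hl
    nlinarith

theorem prod_zpow_eq_inv_pow_mul_prod_pow {ι G₀ : Type*} [Fintype ι] [CommGroupWithZero G₀]
    {y : ι → G₀} {l c : ι → ℕ} {r : ι → ℤ} {M : ℕ} (hy : ∏ i, y i ^ l i ≠ 0)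
    (hc : ∀ i, (c i : ℤ) = r i + M * l i) :
    ∏ i, y i ^ r i = (∏ i, y i ^ l i)⁻¹ ^ M * ∏ i, y i ^ c i := by
  have hfactor : ∀ i, y i ^ c i = y i ^ r i * (y i ^ l i) ^ M := fun i ↦ by
    rw [← zpow_natCast, hc]
    by_cases hyi : y i = 0
    · have hl : l i = 0 := by
        by_contra hl
        exact Finset.prod_ne_zero_iff.mp hy i (Finset.mem_univ i) (by simp [hyi, hl])
      simp [hl]
    · rw [zpow_add₀ hyi, ← pow_mul, ← zpow_natCast (y i) (l i * M)]
      push_cast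
      ring_nf
  simp only [hfactor, Finset.prod_mul_distrib, Finset.prod_pow, inv_pow]
  rw [eq_inv_mul_iff_mul_eq₀ (pow_ne_zero _ hy), mul_comm]

theorem exists_abs_prod_zpow_le_pow {ι K : Type*} [Fintype ι] [Field K] [LinearOrder K]
    [IsStrictOrderedRing K] {l : ι → ℕ} {r : ι → ℤ} (hlr : ∀ i, l i = 0 → 0 ≤ r i) :
    ∃ k : ℕ, ∀ (y : ι → K) (R : K), ∏ i, y i ^ l i ≠ 0 → |(∏ i, y i ^ l i)⁻¹| ≤ R →
      (∀ i, |y i| ≤ R) → |∏ i, y i ^ r i| ≤ R ^ k := by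
  obtain ⟨M, c, hc⟩ := exists_natCast_eq_add_mul hlr
  refine ⟨M + ∑ i, c i, fun y R hy ht hyR ↦ ?_⟩
  rw [prod_zpow_eq_inv_pow_mul_prod_pow hy hc, abs_mul, abs_pow, Finset.abs_prod, pow_add,
    ← Finset.prod_pow_eq_pow_sum]
  simp only [abs_pow]
  have hR : 0 ≤ R := (abs_nonneg _).trans ht
  gcongr with i
  exact hyR i

theorem SchwartzMap.integrableOn_smul_apply_prodMk {E F V : Type*} [NormedAddCommGroup E]
    [NormedSpace ℝ E] [MeasurableSpace E] [OpensMeasurableSpace E] [SecondCountableTopology E]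
    [NormedAddCommGroup F] [NormedSpace ℝ F] [NormedAddCommGroup V] [NormedSpace ℝ V]
    {μ : Measure E} [μ.HasTemperateGrowth]
    (f : 𝓢(E × F, V)) {s : Set E} (hs : MeasurableSet s) {w : E → ℝ} {φ : E → F}
    (hw : AEStronglyMeasurable w (μ.restrict s)) (hφ : AEStronglyMeasurable φ (μ.restrict s))
    (k : ℕ) (hwφ : ∀ y ∈ s, |w y| ≤ (1 + ‖(y, φ y)‖) ^ k) :
    IntegrableOn (fun y ↦ w y • f (y, φ y)) s μ := by
  set N := μ.integrablePower
  set C := 2 ^ (k + N) * (Finset.Iic (k + N, 0)).sup (fun m ↦ SchwartzMap.seminorm ℝ m.1 m.2) f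
  have hdecay : ∀ x, (1 + ‖x‖) ^ (k + N) * ‖f x‖ ≤ C := fun x ↦ by
    simpa using f.one_add_le_sup_seminorm_apply (𝕜 := ℝ) (m := (k + N, 0)) le_rfl le_rfl x
  have hbound : ∀ y ∈ s, ‖w y • f (y, φ y)‖ ≤ C * (1 + ‖y‖) ^ (-(N : ℝ)) := by
    intro y hy
    set x := (y, φ y)
    have hyx : 1 + ‖y‖ ≤ 1 + ‖x‖ := by gcongr; exact norm_fst_le x
    calc ‖w y • f x‖ = |w y| * ‖f x‖ := by rw [norm_smul, Real.norm_eq_abs]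
      _ ≤ (1 + ‖x‖) ^ k * ‖f x‖ := by gcongr; exact hwφ y hy
      _ = (1 + ‖x‖) ^ (k + N) * ‖f x‖ * (1 + ‖x‖) ^ (-(N : ℝ)) := by
        rw [Real.rpow_neg (by positivity), Real.rpow_natCast, pow_add]
        field_simp
      _ ≤ C * (1 + ‖y‖) ^ (-(N : ℝ)) := by
        gcongr ?_ * ?_
        · exact hdecay x
        · exact Real.rpow_le_rpow_of_nonpos (by positivity) hyx (by simp)
  refine Integrable.mono' ((Measure.integrable_pow_neg_integrablePower μ).const_mul C).integrableOn
    ?_ (ae_restrict_of_forall_mem hs hbound)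
  exact hw.smul (f.continuous.comp_aestronglyMeasurable (aestronglyMeasurable_id.prodMk hφ))

/-- Integrability part of Lemma 6.2: for any Schwartz function `f` on `(Fin n → ℝ) × ℝ`,
the function `y ↦ (∏ i, (y i)^(r i)) • f (y, (p y)⁻¹)` is integrable on `Y₀`. -/
theorem stmt_1 (n : ℕ) (l : Fin n → ℕ) (r : Fin n → ℤ)
    (hlr : ∀ i, l i = 0 → 0 ≤ r i)
    (f : SchwartzMap ((Fin n → ℝ) × ℝ) ℂ) :
    IntegrableOn
      (fun y : Fin n → ℝ => (∏ i, y i ^ r i : ℝ) • f (y, (∏ i, y i ^ l i)⁻¹))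
      {y : Fin n → ℝ | (∏ i, y i ^ l i) ≠ 0} volume := by
  obtain ⟨k, hk⟩ := exists_abs_prod_zpow_le_pow (K := ℝ) hlr
  refine f.integrableOn_smul_apply_prodMk (by measurability)
    (by fun_prop : Measurable _).aestronglyMeasurable
    (by fun_prop : Measurable _).aestronglyMeasurable k fun y hy ↦ ?_
  set x : (Fin n → ℝ) × ℝ := (y, (∏ i, y i ^ l i)⁻¹)
  have hx : ‖x‖ ≤ 1 + ‖x‖ := le_add_of_nonneg_left zero_le_one
  exact hk y _ hy ((norm_snd_le x).trans hx)
    fun i ↦ ((norm_le_pi_norm y i).trans (norm_fst_le x)).trans hx
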